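/- Let f : [0,∞) → [0,∞) be a convex, strictly monotonically increasing function with f(0) = 0 that maps [0,∞) onto [0,∞) (so that its inverse exists and is non-negative, increasing and concave). Let A and B be n×n positive semidefinite complex matrices such that A − ‖B‖·I is positive semidefinite. Then for every index k, λ_k↓(f(A − B)) ≤ λ_k↓(f(A) − f(B)). -/

import Mathlib

open Matrix
open scoped ComplexOrder

/-- The eigenvalues of a square matrix, sorted in non-increasing order
(junk value `0` if the matrix is not Hermitian). -/
noncomputable def eigValsDown {𝕜 : Type*} [RCLike 𝕜] {n : ℕ}
    (A : Matrix (Fin n) (Fin n) 𝕜) : Fin n → ℝ :=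
  if hA : A.IsHermitian then
    fun k => (hA.eigenvalues ∘ Tuple.sort hA.eigenvalues) k.rev
  else 0

/-- Functional calculus: apply a real function to a Hermitian matrix via its spectral
decomposition (junk value `0` if the matrix is not Hermitian). -/
noncomputable def matFun {𝕜 : Type*} [RCLike 𝕜] {n : ℕ} (h : ℝ → ℝ)
    (A : Matrix (Fin n) (Fin n) 𝕜) : Matrix (Fin n) (Fin n) 𝕜 :=
  if hA : A.IsHermitian then
    (hA.eigenvectorUnitary : Matrix (Fin n) (Fin n) 𝕜) *
      Matrix.diagonal (fun i => (h (hA.eigenvalues i) : 𝕜)) *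
      star (hA.eigenvectorUnitary : Matrix (Fin n) (Fin n) 𝕜)
  else 0

/-- The operator norm (largest singular value) of a matrix. -/
noncomputable def opNorm {𝕜 : Type*} [RCLike 𝕜] {n : ℕ}
    (A : Matrix (Fin n) (Fin n) 𝕜) : ℝ :=
  ‖Matrix.toEuclideanCLM (𝕜 := 𝕜) A‖

/-- The matrix absolute value `|M| = (Mᴴ M)^(1/2)`. -/
noncomputable def matAbs {𝕜 : Type*} [RCLike 𝕜] {n : ℕ}
    (A : Matrix (Fin n) (Fin n) 𝕜) : Matrix (Fin n) (Fin n) 𝕜 :=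
  (Matrix.posSemidef_conjTranspose_mul_self A).1.eigenvectorUnitary.1 *
    Matrix.diagonal ((↑) ∘ (Real.sqrt ·) ∘ (Matrix.posSemidef_conjTranspose_mul_self A).1.eigenvalues) *
    (star (Matrix.posSemidef_conjTranspose_mul_self A).1.eigenvectorUnitary : Matrix (Fin n) (Fin n) 𝕜)

/-- The Ky Fan `k`-norm: the sum of the `k` largest singular values. -/
noncomputable def kyFanNorm {𝕜 : Type*} [RCLike 𝕜] {n : ℕ} (k : ℕ)
    (A : Matrix (Fin n) (Fin n) 𝕜) : ℝ :=
  ∑ j ∈ Finset.univ.filter (fun j : Fin n => (j : ℕ) < k), eigValsDown (matAbs A) j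

/-!
For a unit vector `x` put `α = ⟪x, A x⟫`, `β = ⟪x, B x⟫` and `b = ‖B‖`; then `b ≤ α` and
`0 ≤ β ≤ b`, so in particular `A - B ≥ 0`. With `s = f b / b`, convexity and `f 0 = 0` give
`f ≤ s • id` on `[0, b]`, hence `⟪x, f(B) x⟫ ≤ s β`, and comparing slopes gives
`f (α - β) + s β ≤ f α`. Jensen's inequality in the eigenbasis of `A` gives `f α ≤ ⟪x, f(A) x⟫`,
so `f ⟪x, (A - B) x⟫ ≤ ⟪x, (f(A) - f(B)) x⟫`. On the span of the top `k + 1` eigenvectors of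
`A - B` the left side is at least `f (λₖ(A - B)) = λₖ(f(A - B))`, and Courant–Fischer concludes.
-/

variable {𝕜 : Type*} [RCLike 𝕜] {n : ℕ}

lemma dotProduct_star_self_eq_norm_sq (x : Fin n → 𝕜) :
    star x ⬝ᵥ x = ((‖WithLp.toLp 2 x‖ ^ 2 : ℝ) : 𝕜) := by
  rw [dotProduct_comm, RCLike.ofReal_pow, ← inner_self_eq_norm_sq_to_K,
    EuclideanSpace.inner_eq_star_dotProduct]

lemma re_dotProduct_conj_diagonal_mulVec (U : unitaryGroup (Fin n) 𝕜) (d : Fin n → ℝ)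
    (x : Fin n → 𝕜) :
    RCLike.re (star x ⬝ᵥ (((U : Matrix (Fin n) (Fin n) 𝕜) * diagonal (fun i => (d i : 𝕜)) *
      star (U : Matrix (Fin n) (Fin n) 𝕜)) *ᵥ x)) =
      ∑ i, d i * ‖(star (U : Matrix (Fin n) (Fin n) 𝕜) *ᵥ x) i‖ ^ 2 := by
  set y := star (U : Matrix (Fin n) (Fin n) 𝕜) *ᵥ x
  have hy : star x ᵥ* (U : Matrix (Fin n) (Fin n) 𝕜) = star y := by
    rw [star_mulVec, star_eq_conjTranspose, conjTranspose_conjTranspose]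
  rw [← mulVec_mulVec, ← mulVec_mulVec, dotProduct_mulVec, hy, dotProduct, map_sum]
  refine Finset.sum_congr rfl fun i _ => ?_
  rw [mulVec_diagonal, Pi.star_apply, mul_left_comm, RCLike.star_def, RCLike.conj_mul]
  norm_cast

lemma sum_norm_sq_star_mulVec (U : unitaryGroup (Fin n) 𝕜) (x : Fin n → 𝕜) :
    ∑ i, ‖(star (U : Matrix (Fin n) (Fin n) 𝕜) *ᵥ x) i‖ ^ 2 = ‖WithLp.toLp 2 x‖ ^ 2 := by
  have h := re_dotProduct_conj_diagonal_mulVec U (fun _ => 1) x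
  simp only [RCLike.ofReal_one, diagonal_one, mul_one, one_mul] at h
  rw [← h, Unitary.mul_star_self_of_mem U.2, one_mulVec, dotProduct_star_self_eq_norm_sq,
    RCLike.ofReal_re]

lemma matFun_of_isHermitian {H : Matrix (Fin n) (Fin n) 𝕜} (hH : H.IsHermitian) (g : ℝ → ℝ) :
    matFun g H = (hH.eigenvectorUnitary : Matrix (Fin n) (Fin n) 𝕜) *
      diagonal (fun i => (g (hH.eigenvalues i) : 𝕜)) *
      star (hH.eigenvectorUnitary : Matrix (Fin n) (Fin n) 𝕜) := by
  rw [matFun, dif_pos hH]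

lemma matFun_id {H : Matrix (Fin n) (Fin n) 𝕜} (hH : H.IsHermitian) : matFun id H = H := by
  conv_rhs => rw [hH.spectral_theorem, Unitary.conjStarAlgAut_apply]
  rw [matFun_of_isHermitian hH]
  rfl

lemma isHermitian_matFun {H : Matrix (Fin n) (Fin n) 𝕜} (hH : H.IsHermitian) (g : ℝ → ℝ) :
    (matFun g H).IsHermitian := by
  rw [matFun_of_isHermitian hH, star_eq_conjTranspose]
  exact isHermitian_mul_mul_conjTranspose _ (isHermitian_diagonal_of_self_adjoint _
    (funext fun i => RCLike.conj_ofReal _))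

lemma re_dotProduct_matFun_mulVec {H : Matrix (Fin n) (Fin n) 𝕜} (hH : H.IsHermitian)
    (g : ℝ → ℝ) (x : Fin n → 𝕜) :
    RCLike.re (star x ⬝ᵥ (matFun g H *ᵥ x)) = ∑ i, g (hH.eigenvalues i) *
      ‖(star (hH.eigenvectorUnitary : Matrix (Fin n) (Fin n) 𝕜) *ᵥ x) i‖ ^ 2 := by
  rw [matFun_of_isHermitian hH]
  exact re_dotProduct_conj_diagonal_mulVec _ (fun i => g (hH.eigenvalues i)) x

namespace Matrix.IsHermitian

variable {H : Matrix (Fin n) (Fin n) 𝕜} (hH : H.IsHermitian)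

noncomputable def sortDown : Equiv.Perm (Fin n) :=
  Fin.revPerm.trans (Tuple.sort hH.eigenvalues)

noncomputable def sortedEigenspan (s : Finset (Fin n)) : Submodule 𝕜 (Fin n → 𝕜) :=
  Submodule.span 𝕜 (Set.range fun j : s => ⇑(hH.eigenvectorBasis (hH.sortDown j)))

lemma finrank_sortedEigenspan (s : Finset (Fin n)) :
    Module.finrank 𝕜 (hH.sortedEigenspan s) = s.card := by
  have hli : LinearIndependent 𝕜 fun j : s => ⇑(hH.eigenvectorBasis (hH.sortDown j)) :=
    (hH.eigenvectorBasis.orthonormal.linearIndependent.comp _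
      (hH.sortDown.injective.comp Subtype.val_injective)).map'
      (WithLp.linearEquiv 2 𝕜 (Fin n → 𝕜)).toLinearMap (LinearEquiv.ker _)
  rw [sortedEigenspan, finrank_span_eq_card hli, Fintype.card_coe]

lemma star_eigenvectorUnitary_mulVec_sortDown_eq_zero {s : Finset (Fin n)} {x : Fin n → 𝕜}
    (hx : x ∈ hH.sortedEigenspan s) {j : Fin n} (hj : j ∉ s) :
    (star (hH.eigenvectorUnitary : Matrix (Fin n) (Fin n) 𝕜) *ᵥ x) (hH.sortDown j) = 0 := by
  let coord : (Fin n → 𝕜) →ₗ[𝕜] 𝕜 := LinearMap.proj (hH.sortDown j) ∘ₗ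
    mulVecLin (star (hH.eigenvectorUnitary : Matrix (Fin n) (Fin n) 𝕜))
  have hle : hH.sortedEigenspan s ≤ LinearMap.ker coord := by
    refine Submodule.span_le.mpr ?_
    rintro _ ⟨i, rfl⟩
    have hij : hH.sortDown i ≠ hH.sortDown j :=
      hH.sortDown.injective.ne (ne_of_mem_of_not_mem i.2 hj)
    simp [coord, star_eigenvectorUnitary_mulVec, hij.symm]
  exact hle hx

end Matrix.IsHermitian

lemma eigValsDown_eq {H : Matrix (Fin n) (Fin n) 𝕜} (hH : H.IsHermitian) (k : Fin n) :
    eigValsDown H k = hH.eigenvalues (hH.sortDown k) := by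
  rw [eigValsDown, dif_pos hH]
  rfl

lemma eigValsDown_antitone {H : Matrix (Fin n) (Fin n) 𝕜} (hH : H.IsHermitian) :
    Antitone (eigValsDown H) := fun i j hij => by
  simp only [eigValsDown_eq hH]
  exact Tuple.monotone_sort hH.eigenvalues (Fin.rev_le_rev.mpr hij)

lemma re_dotProduct_matFun_mulVec_eq_sum_sortDown {H : Matrix (Fin n) (Fin n) 𝕜}
    (hH : H.IsHermitian) (g : ℝ → ℝ) (x : Fin n → 𝕜) :
    RCLike.re (star x ⬝ᵥ (matFun g H *ᵥ x)) = ∑ j, g (eigValsDown H j) *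
      ‖(star (hH.eigenvectorUnitary : Matrix (Fin n) (Fin n) 𝕜) *ᵥ x) (hH.sortDown j)‖ ^ 2 := by
  simp only [re_dotProduct_matFun_mulVec hH, eigValsDown_eq hH]
  exact (Equiv.sum_comp hH.sortDown _).symm

section SortedEigenspan

variable {H : Matrix (Fin n) (Fin n) 𝕜} (hH : H.IsHermitian)
include hH

lemma sum_norm_sq_star_eigenvectorUnitary_mulVec_sortDown {x : Fin n → 𝕜}
    (hx1 : ‖WithLp.toLp 2 x‖ = 1) :
    ∑ j, ‖(star (hH.eigenvectorUnitary : Matrix (Fin n) (Fin n) 𝕜) *ᵥ x) (hH.sortDown j)‖ ^ 2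
      = 1 := by
  rw [Equiv.sum_comp hH.sortDown (fun i => ‖_‖ ^ 2), sum_norm_sq_star_mulVec, hx1, one_pow]

lemma re_dotProduct_matFun_mulVec_le_of_mem (g : ℝ → ℝ) {s : Finset (Fin n)} {c : ℝ}
    (hg : ∀ j ∈ s, g (eigValsDown H j) ≤ c) {x : Fin n → 𝕜} (hx : x ∈ hH.sortedEigenspan s)
    (hx1 : ‖WithLp.toLp 2 x‖ = 1) :
    RCLike.re (star x ⬝ᵥ (matFun g H *ᵥ x)) ≤ c := by
  rw [re_dotProduct_matFun_mulVec_eq_sum_sortDown hH, ← mul_one c,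
    ← sum_norm_sq_star_eigenvectorUnitary_mulVec_sortDown hH hx1, Finset.mul_sum]
  refine Finset.sum_le_sum fun j _ => ?_
  by_cases hj : j ∈ s
  · exact mul_le_mul_of_nonneg_right (hg j hj) (sq_nonneg _)
  · simp [hH.star_eigenvectorUnitary_mulVec_sortDown_eq_zero hx hj]

lemma le_re_dotProduct_matFun_mulVec_of_mem (g : ℝ → ℝ) {s : Finset (Fin n)} {c : ℝ}
    (hg : ∀ j ∈ s, c ≤ g (eigValsDown H j)) {x : Fin n → 𝕜} (hx : x ∈ hH.sortedEigenspan s)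
    (hx1 : ‖WithLp.toLp 2 x‖ = 1) :
    c ≤ RCLike.re (star x ⬝ᵥ (matFun g H *ᵥ x)) := by
  rw [re_dotProduct_matFun_mulVec_eq_sum_sortDown hH, ← mul_one c,
    ← sum_norm_sq_star_eigenvectorUnitary_mulVec_sortDown hH hx1, Finset.mul_sum]
  refine Finset.sum_le_sum fun j _ => ?_
  by_cases hj : j ∈ s
  · exact mul_le_mul_of_nonneg_right (hg j hj) (sq_nonneg _)
  · simp [hH.star_eigenvectorUnitary_mulVec_sortDown_eq_zero hx hj]

lemma re_dotProduct_mulVec_le_eigValsDown_of_mem (k : Fin n) {x : Fin n → 𝕜}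
    (hx : x ∈ hH.sortedEigenspan (Finset.Ici k)) (hx1 : ‖WithLp.toLp 2 x‖ = 1) :
    RCLike.re (star x ⬝ᵥ (H *ᵥ x)) ≤ eigValsDown H k := by
  simpa only [matFun_id hH] using re_dotProduct_matFun_mulVec_le_of_mem hH id
    (fun j hj => eigValsDown_antitone hH (Finset.mem_Ici.mp hj)) hx hx1

lemma eigValsDown_le_re_dotProduct_mulVec_of_mem (k : Fin n) {x : Fin n → 𝕜}
    (hx : x ∈ hH.sortedEigenspan (Finset.Iic k)) (hx1 : ‖WithLp.toLp 2 x‖ = 1) :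
    eigValsDown H k ≤ RCLike.re (star x ⬝ᵥ (H *ᵥ x)) := by
  simpa only [matFun_id hH] using le_re_dotProduct_matFun_mulVec_of_mem hH id
    (fun j hj => eigValsDown_antitone hH (Finset.mem_Iic.mp hj)) hx hx1

end SortedEigenspan

lemma exists_norm_eq_one_mem_inf {S T : Submodule 𝕜 (Fin n → 𝕜)}
    (h : n < Module.finrank 𝕜 S + Module.finrank 𝕜 T) :
    ∃ x ∈ S ⊓ T, ‖WithLp.toLp 2 x‖ = 1 := by
  have hsup : Module.finrank 𝕜 ↥(S ⊔ T) ≤ n :=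
    (Submodule.finrank_le _).trans_eq (Module.finrank_fin_fun 𝕜)
  have hdim := Submodule.finrank_sup_add_finrank_inf_eq S T
  obtain ⟨x, hx, hx0⟩ := Submodule.exists_mem_ne_zero_of_ne_bot (p := S ⊓ T) fun hbot => by
    rw [hbot, finrank_bot] at hdim
    omega
  refine ⟨(‖WithLp.toLp 2 x‖⁻¹ : 𝕜) • x, (S ⊓ T).smul_mem _ hx, ?_⟩
  simpa using norm_smul_inv_norm (𝕜 := 𝕜) (x := WithLp.toLp 2 x) (by simpa using hx0)

lemma le_eigValsDown_of_forall_mem {M : Matrix (Fin n) (Fin n) 𝕜} (hM : M.IsHermitian)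
    (k : Fin n) {c : ℝ} (S : Submodule 𝕜 (Fin n → 𝕜)) (hS : k + 1 ≤ Module.finrank 𝕜 S)
    (h : ∀ x ∈ S, ‖WithLp.toLp 2 x‖ = 1 → c ≤ RCLike.re (star x ⬝ᵥ (M *ᵥ x))) :
    c ≤ eigValsDown M k := by
  have hT := hM.finrank_sortedEigenspan (Finset.Ici k)
  rw [Fin.card_Ici] at hT
  obtain ⟨x, ⟨hxS, hxT⟩, hx1⟩ :=
    exists_norm_eq_one_mem_inf (S := S) (T := hM.sortedEigenspan (Finset.Ici k)) (by omega)
  exact (h x hxS hx1).trans (re_dotProduct_mulVec_le_eigValsDown_of_mem hM k hxT hx1)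

lemma eigValsDown_le_of_forall_mem {M : Matrix (Fin n) (Fin n) 𝕜} (hM : M.IsHermitian)
    (k : Fin n) {c : ℝ} (T : Submodule 𝕜 (Fin n → 𝕜)) (hT : n - k ≤ Module.finrank 𝕜 T)
    (h : ∀ x ∈ T, ‖WithLp.toLp 2 x‖ = 1 → RCLike.re (star x ⬝ᵥ (M *ᵥ x)) ≤ c) :
    eigValsDown M k ≤ c := by
  have hS := hM.finrank_sortedEigenspan (Finset.Iic k)
  rw [Fin.card_Iic] at hS
  obtain ⟨x, ⟨hxS, hxT⟩, hx1⟩ :=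
    exists_norm_eq_one_mem_inf (S := hM.sortedEigenspan (Finset.Iic k)) (T := T) (by omega)
  exact (eigValsDown_le_re_dotProduct_mulVec_of_mem hM k hxS hx1).trans (h x hxT hx1)

lemma eigValsDown_matFun {H : Matrix (Fin n) (Fin n) 𝕜} (hH : H.IsHermitian) {g : ℝ → ℝ}
    {s : Set ℝ} (hg : MonotoneOn g s) (hs : ∀ i, hH.eigenvalues i ∈ s) (k : Fin n) :
    eigValsDown (matFun g H) k = g (eigValsDown H k) := by
  have hmem : ∀ j, eigValsDown H j ∈ s := fun j => eigValsDown_eq hH j ▸ hs _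
  have hmono : ∀ {i j}, i ≤ j → g (eigValsDown H j) ≤ g (eigValsDown H i) := fun hij =>
    hg (hmem _) (hmem _) (eigValsDown_antitone hH hij)
  apply le_antisymm
  · refine eigValsDown_le_of_forall_mem (isHermitian_matFun hH g) k _ ?_ fun x hx hx1 =>
      re_dotProduct_matFun_mulVec_le_of_mem hH g (fun j hj => hmono (Finset.mem_Ici.mp hj)) hx hx1
    rw [hH.finrank_sortedEigenspan, Fin.card_Ici]
  · refine le_eigValsDown_of_forall_mem (isHermitian_matFun hH g) k _ ?_ fun x hx hx1 =>
      le_re_dotProduct_matFun_mulVec_of_mem hH g (fun j hj => hmono (Finset.mem_Iic.mp hj)) hx hx1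
    rw [hH.finrank_sortedEigenspan, Fin.card_Iic]

lemma Matrix.IsHermitian.exists_eigenvalues_eq_re_dotProduct_mulVec
    {H : Matrix (Fin n) (Fin n) 𝕜} (hH : H.IsHermitian) (i : Fin n) :
    ∃ x : Fin n → 𝕜, ‖WithLp.toLp 2 x‖ = 1 ∧ hH.eigenvalues i = RCLike.re (star x ⬝ᵥ (H *ᵥ x)) :=
  ⟨_, hH.eigenvectorBasis.orthonormal.1 i, hH.eigenvalues_eq i⟩

lemma re_dotProduct_mulVec_le_opNorm (B : Matrix (Fin n) (Fin n) 𝕜) {x : Fin n → 𝕜}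
    (hx1 : ‖WithLp.toLp 2 x‖ = 1) : RCLike.re (star x ⬝ᵥ (B *ᵥ x)) ≤ opNorm B := by
  have h : star x ⬝ᵥ (B *ᵥ x) =
      inner 𝕜 (WithLp.toLp 2 x) (toEuclideanCLM (n := Fin n) (𝕜 := 𝕜) B (WithLp.toLp 2 x)) := by
    rw [EuclideanSpace.inner_eq_star_dotProduct, dotProduct_comm]
    rfl
  calc RCLike.re (star x ⬝ᵥ (B *ᵥ x))
      ≤ ‖WithLp.toLp 2 x‖ * ‖toEuclideanCLM (n := Fin n) (𝕜 := 𝕜) B (WithLp.toLp 2 x)‖ := by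
        rw [h]
        exact (RCLike.re_le_norm _).trans (norm_inner_le_norm _ _)
    _ ≤ ‖WithLp.toLp 2 x‖ * (opNorm B * ‖WithLp.toLp 2 x‖) := by
        gcongr
        exact ContinuousLinearMap.le_opNorm _ _
    _ = opNorm B := by rw [hx1, one_mul, mul_one]

lemma le_re_dotProduct_mulVec_of_posSemidef_sub {A : Matrix (Fin n) (Fin n) 𝕜} {c : ℝ}
    (hA : (A - c • (1 : Matrix (Fin n) (Fin n) 𝕜)).PosSemidef) {x : Fin n → 𝕜}
    (hx1 : ‖WithLp.toLp 2 x‖ = 1) : c ≤ RCLike.re (star x ⬝ᵥ (A *ᵥ x)) := by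
  have h := hA.re_dotProduct_nonneg x
  rwa [sub_mulVec, dotProduct_sub, smul_mulVec, one_mulVec, dotProduct_smul,
    dotProduct_star_self_eq_norm_sq, hx1, map_sub, one_pow, RCLike.ofReal_one, RCLike.smul_re,
    RCLike.one_re, mul_one, sub_nonneg] at h

section ConvexFunction

variable {H : Matrix (Fin n) (Fin n) 𝕜} (hH : H.IsHermitian)
include hH

lemma re_dotProduct_mulVec_eq_sum (x : Fin n → 𝕜) :
    RCLike.re (star x ⬝ᵥ (H *ᵥ x)) = ∑ i, hH.eigenvalues i *
      ‖(star (hH.eigenvectorUnitary : Matrix (Fin n) (Fin n) 𝕜) *ᵥ x) i‖ ^ 2 := by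
  simpa only [matFun_id hH, id] using re_dotProduct_matFun_mulVec hH id x

lemma ConvexOn.map_re_dotProduct_mulVec_le {g : ℝ → ℝ} {s : Set ℝ} (hg : ConvexOn ℝ s g)
    (hs : ∀ i, hH.eigenvalues i ∈ s) {x : Fin n → 𝕜} (hx1 : ‖WithLp.toLp 2 x‖ = 1) :
    g (RCLike.re (star x ⬝ᵥ (H *ᵥ x))) ≤ RCLike.re (star x ⬝ᵥ (matFun g H *ᵥ x)) := by
  have hw : ∑ i, ‖(star (hH.eigenvectorUnitary : Matrix (Fin n) (Fin n) 𝕜) *ᵥ x) i‖ ^ 2 = 1 := by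
    rw [sum_norm_sq_star_mulVec, hx1, one_pow]
  simpa only [re_dotProduct_mulVec_eq_sum hH, re_dotProduct_matFun_mulVec hH, smul_eq_mul,
    mul_comm (‖_‖ ^ 2)] using
    hg.map_sum_le (fun i _ => sq_nonneg _) hw (fun i _ => hs i)

lemma re_dotProduct_matFun_mulVec_le_mul {g : ℝ → ℝ} {c : ℝ}
    (hg : ∀ i, g (hH.eigenvalues i) ≤ c * hH.eigenvalues i) (x : Fin n → 𝕜) :
    RCLike.re (star x ⬝ᵥ (matFun g H *ᵥ x)) ≤ c * RCLike.re (star x ⬝ᵥ (H *ᵥ x)) := by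
  rw [re_dotProduct_matFun_mulVec hH, re_dotProduct_mulVec_eq_sum hH, Finset.mul_sum]
  refine Finset.sum_le_sum fun i _ => ?_
  rw [← mul_assoc]
  exact mul_le_mul_of_nonneg_right (hg i) (sq_nonneg _)

end ConvexFunction

section Scalar

variable {f : ℝ → ℝ} (hf : ConvexOn ℝ (Set.Ici 0) f) (hf0 : f 0 = 0)
include hf hf0

-- No `0 < b` is needed: `b = 0` forces `t = 0`, so the junk value `f 0 / 0 = 0` is harmless.
lemma ConvexOn.le_div_mul_of_le {b t : ℝ} (ht : 0 ≤ t) (htb : t ≤ b) : f t ≤ f b / b * t := by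
  rcases ht.eq_or_lt with rfl | ht
  · simp [hf0]
  have hb := ht.trans_le htb
  have h := hf.secant_mono Set.self_mem_Ici ht.le hb.le ht.ne' hb.ne' htb
  simp only [hf0, sub_zero] at h
  rwa [div_le_iff₀ ht] at h

lemma ConvexOn.add_div_mul_le {a b t : ℝ} (ht : 0 ≤ t) (htb : t ≤ b) (hba : b ≤ a) :
    f (a - t) + f b / b * t ≤ f a := by
  rcases ht.eq_or_lt with rfl | ht
  · simp
  have hb := ht.trans_le htb
  have ha := hb.trans_le hba
  -- slope of `f` on `[0, b]` ≤ slope on `[0, a]` ≤ slope on `[a - t, a]`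
  have h₁ := hf.secant_mono Set.self_mem_Ici hb.le ha.le hb.ne' ha.ne' hba
  have h₂ := hf.secant_mono (a := a) ha.le Set.self_mem_Ici
    (sub_nonneg.2 (htb.trans hba) : (0 : ℝ) ≤ a - t) ha.ne (by linarith) (by linarith)
  simp only [hf0, sub_zero, zero_sub, sub_sub_cancel_left, div_neg, ← neg_div, neg_sub,
    neg_neg] at h₁ h₂
  have h₃ := mul_le_mul_of_nonneg_right (h₁.trans h₂) ht.le
  rw [div_mul_cancel₀ _ ht.ne'] at h₃
  linarith

end Scalar

lemma Matrix.IsHermitian.eigenvalues_le_opNorm {B : Matrix (Fin n) (Fin n) 𝕜}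
    (hB : B.IsHermitian) (i : Fin n) : hB.eigenvalues i ≤ opNorm B := by
  obtain ⟨x, hx1, hx⟩ := hB.exists_eigenvalues_eq_re_dotProduct_mulVec i
  exact hx ▸ re_dotProduct_mulVec_le_opNorm B hx1

lemma map_re_dotProduct_sub_mulVec_le {A B : Matrix (Fin n) (Fin n) 𝕜} (hA : A.PosSemidef)
    (hB : B.PosSemidef) (hAB : (A - opNorm B • (1 : Matrix (Fin n) (Fin n) 𝕜)).PosSemidef)
    {f : ℝ → ℝ} (hf : ConvexOn ℝ (Set.Ici 0) f) (hf0 : f 0 = 0) {x : Fin n → 𝕜}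
    (hx1 : ‖WithLp.toLp 2 x‖ = 1) :
    f (RCLike.re (star x ⬝ᵥ ((A - B) *ᵥ x))) ≤
      RCLike.re (star x ⬝ᵥ ((matFun f A - matFun f B) *ᵥ x)) := by
  have hB_nonneg := hB.re_dotProduct_nonneg x
  have hB_le := re_dotProduct_mulVec_le_opNorm B hx1
  have hA_ge := le_re_dotProduct_mulVec_of_posSemidef_sub hAB hx1
  have hfA := hf.map_re_dotProduct_mulVec_le hA.1 hA.eigenvalues_nonneg hx1
  have hfB := re_dotProduct_matFun_mulVec_le_mul hB.1 (fun i => hf.le_div_mul_of_le hf0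
    (hB.eigenvalues_nonneg i) (hB.1.eigenvalues_le_opNorm i)) x
  rw [sub_mulVec, dotProduct_sub, map_sub, sub_mulVec, dotProduct_sub, map_sub]
  linarith [hf.add_div_mul_le hf0 hB_nonneg hB_le hA_ge]

theorem stmt1_general {n : ℕ} (A B : Matrix (Fin n) (Fin n) ℂ)
    (hA : A.PosSemidef) (hB : B.PosSemidef)
    (hAB : (A - opNorm B • (1 : Matrix (Fin n) (Fin n) ℂ)).PosSemidef)
    (f : ℝ → ℝ)
    (hf_mono : StrictMonoOn f (Set.Ici (0 : ℝ)))
    (hf_conv : ConvexOn ℝ (Set.Ici (0 : ℝ)) f)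
    (hf0 : f 0 = 0)
    (k : Fin n) :
    eigValsDown (matFun f (A - B)) k ≤ eigValsDown (matFun f A - matFun f B) k := by
  have hC : (A - B).IsHermitian := hA.1.sub hB.1
  have hC_nonneg : ∀ x : Fin n → ℂ, ‖WithLp.toLp 2 x‖ = 1 →
      0 ≤ RCLike.re (star x ⬝ᵥ ((A - B) *ᵥ x)) := fun x hx1 => by
    rw [sub_mulVec, dotProduct_sub, map_sub, sub_nonneg]
    exact (re_dotProduct_mulVec_le_opNorm B hx1).trans
      (le_re_dotProduct_mulVec_of_posSemidef_sub hAB hx1)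
  have hC_eig : ∀ i, 0 ≤ hC.eigenvalues i := fun i => by
    obtain ⟨x, hx1, hx⟩ := hC.exists_eigenvalues_eq_re_dotProduct_mulVec i
    exact hx ▸ hC_nonneg x hx1
  have hmono := hf_mono.monotoneOn
  rw [eigValsDown_matFun hC hmono hC_eig]
  refine le_eigValsDown_of_forall_mem
    ((isHermitian_matFun hA.1 f).sub (isHermitian_matFun hB.1 f)) k
    (hC.sortedEigenspan (Finset.Iic k)) (by rw [hC.finrank_sortedEigenspan, Fin.card_Iic])
    fun x hx hx1 => ?_
  exact (hmono (eigValsDown_eq hC k ▸ hC_eig _) (hC_nonneg x hx1)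
    (eigValsDown_le_re_dotProduct_mulVec_of_mem hC k hx hx1)).trans
    (map_re_dotProduct_sub_mulVec_le hA hB hAB hf_conv hf0 hx1)

/-- Corollary `prop:gg`: for PSD `A, B` with `A ≥ ‖B‖·I` and a
non-negative, strictly increasing, convex `f` on `[0,∞)` with `f(0) = 0` mapping `[0,∞)`
onto `[0,∞)`, each sorted eigenvalue of `f(A - B)` is at most the corresponding sorted
eigenvalue of `f(A) - f(B)`. -/
theorem stmt1 {n : ℕ} (A B : Matrix (Fin n) (Fin n) ℂ)
    (hA : A.PosSemidef) (hB : B.PosSemidef)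
    (hAB : (A - opNorm B • (1 : Matrix (Fin n) (Fin n) ℂ)).PosSemidef)
    (f : ℝ → ℝ) (hf_nonneg : ∀ x ∈ Set.Ici (0 : ℝ), 0 ≤ f x)
    (hf_mono : StrictMonoOn f (Set.Ici (0 : ℝ)))
    (hf_conv : ConvexOn ℝ (Set.Ici (0 : ℝ)) f)
    (hf0 : f 0 = 0)
    (hf_surj : Set.SurjOn f (Set.Ici (0 : ℝ)) (Set.Ici (0 : ℝ)))
    (k : Fin n) :
    eigValsDown (matFun f (A - B)) k ≤ eigValsDown (matFun f A - matFun f B) k :=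
  stmt1_general A B hA hB hAB f hf_mono hf_conv hf0 k
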